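/- Let A be a symmetric positive definite real 3×3 matrix, let ε > 0 and φ ∈ ℝ, and let S denote the unique positive semidefinite square root of φ²·I + 4ε·A. If Y is any symmetric positive definite real 3×3 matrix satisfying φ·Y + ε·Y² = A, then Y = (1/(2ε))·(−φ·I + S). In particular the quadratic matrix equation φ·X + ε·X² = A has exactly one positive definite solution. -/

import Mathlib

open Matrix

abbrev Mat := Matrix (Fin 3) (Fin 3) ℝ

/-!
Put `t = φ + 2ε y`. Completing the square in `φ y + ε y² = a` gives `t² = φ² + 4ε a = s²`, so
`t = s` by uniqueness of nonnegative square roots once `t ≥ 0`. Positivity of `t` is read off the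
spectrum: each `λ ∈ σ(y)` satisfies `λ ≥ 0` and `λ (φ + ελ) > 0` (as `a` is strictly positive),
hence `φ + ελ > 0` and `φ + 2ελ > 0`.
-/

section StarOrderedAlgebra

variable {A : Type*} [PartialOrder A] [Ring A] [StarRing A] [TopologicalSpace A]
  [StarOrderedRing A] [Algebra ℝ A] [ContinuousFunctionalCalculus ℝ A IsSelfAdjoint]
  [NonnegSpectrumClass ℝ A]

lemma nonneg_smul_one_add_two_smul_of_isStrictlyPositive {φ ε : ℝ} (hε : 0 < ε) {y : A}
    (hy : 0 ≤ y) (hq : IsStrictlyPositive (φ • y + ε • (y * y))) :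
    0 ≤ φ • (1 : A) + (2 * ε) • y := by
  have hq_cfc : φ • y + ε • (y * y) = cfc (fun x : ℝ => φ * x + ε * x ^ 2) y := by
    rw [cfc_add .., cfc_const_mul .., cfc_const_mul .., cfc_pow .., cfc_id' ℝ y, sq]
  have hspec : ∀ x ∈ spectrum ℝ y, 0 < φ * x + ε * x ^ 2 :=
    (cfc_isStrictlyPositive_iff _ y).mp (hq_cfc ▸ hq)
  have ht_cfc : φ • (1 : A) + (2 * ε) • y = cfc (fun x : ℝ => φ + 2 * ε * x) y := by
    rw [cfc_add .., cfc_const_mul .., cfc_const φ y, cfc_id' ℝ y, Algebra.algebraMap_eq_smul_one]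
  rw [ht_cfc]
  refine cfc_nonneg fun x hx => ?_
  have hx₀ : 0 ≤ x := spectrum_nonneg_of_nonneg hy hx
  nlinarith [hspec x hx]

variable [IsSemitopologicalRing A] [T2Space A]

theorem eq_of_smul_add_smul_mul_self_eq {a s y : A} {φ ε : ℝ} (hε : 0 < ε)
    (ha : IsStrictlyPositive a) (hs : 0 ≤ s) (hs2 : s * s = φ ^ 2 • (1 : A) + (4 * ε) • a)
    (hy : 0 ≤ y) (hya : φ • y + ε • (y * y) = a) :
    y = (1 / (2 * ε)) • (-(φ • (1 : A)) + s) := by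
  set t := φ • (1 : A) + (2 * ε) • y
  have ht : 0 ≤ t := nonneg_smul_one_add_two_smul_of_isStrictlyPositive hε hy (hya ▸ ha)
  have ht2 : t ^ 2 = s ^ 2 := by
    rw [sq, sq, hs2, ← hya]
    simp only [t, mul_add, add_mul, one_mul, mul_one, smul_mul_assoc,
      mul_smul_comm]
    module
  have hts : t = s := (CFC.sq_eq_sq_iff t s).mp ht2
  rw [← hts, neg_add_cancel_left, smul_smul, one_div, inv_mul_cancel₀ (by positivity), one_smul]

end StarOrderedAlgebra

theorem ifebm_quadratic_unique (A : Mat) (hA : A.PosDef) (ε : ℝ) (hε : 0 < ε) (φ : ℝ)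
    (S : Mat) (hS : S.PosSemidef) (hS2 : S * S = φ ^ 2 • (1 : Mat) + (4 * ε) • A)
    (Y : Mat) (hY : Y.PosDef) (hYeq : φ • Y + ε • (Y * Y) = A) :
    Y = (1 / (2 * ε)) • (-(φ • (1 : Mat)) + S) ∧
      ∃! X : Mat, X.PosDef ∧ φ • X + ε • (X * X) = A := by
  have formula : ∀ X : Mat, X.PosDef → φ • X + ε • (X * X) = A →
      X = (1 / (2 * ε)) • (-(φ • (1 : Mat)) + S) := by
    intro X hX hXeq
    open scoped MatrixOrder in
    exact eq_of_smul_add_smul_mul_self_eq hε hA.isStrictlyPositive hS.nonneg hS2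
      hX.posSemidef.nonneg hXeq
  exact ⟨formula Y hY hYeq, Y, ⟨hY, hYeq⟩, fun X hX => (formula X hX.1 hX.2).trans
    (formula Y hY hYeq).symm⟩
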